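/- arXiv:2311.04402 — 5 statements merged into one kernel-verified Lean document; each statement's English description precedes it below -/
import Mathlib

section
/- Suppose the negative log-likelihood has the form −log p_θ(y_s|x_s) = g(x_s^⊤θ) where g : ℝ → ℝ is μ-strongly convex, and let the regularizer be ψ_t(θ) = λ‖θ‖_2². Define the error-free estimate θ̂_t^× ∈ Θ as the solution of the first-order optimality condition Σ_{s=1}^t E[∇_θ log p_{θ̂_t^×}(y_s|x_s) | F_{s−1}] − ∇ψ_t(θ̂_t^×) − n = 0 for some n in the normal cone of Θ at θ̂_t^×, and define bias_x²(θ̂_t) := (x^⊤(θ* − θ̂_t^×))². Then bias_x²(θ̂_t) ≤ 2λ‖θ*‖_2² · x^⊤ (V_t^{μ;λ})^{-1} x. -/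
/-!
Write `Δ = θ* - θ̂`. Strong convexity makes each `∂_u g_s` strongly monotone, so integrating against
the conditional law and using the score identity at `θ*` gives
`Σ_s μ (x_s ⬝ Δ)² ≤ -Σ_s E[∂_u g_s(x_s ⬝ θ̂)] (x_s ⬝ Δ)`. Testing the first-order condition against
`Δ` and discarding the normal-cone term `n ⬝ Δ ≤ 0` bounds the right side by `2λ θ̂ ⬝ Δ`, whence
`Δᵀ V Δ ≤ λ (‖θ*‖² - ‖θ̂‖²) ≤ 2λ‖θ*‖²`. Cauchy–Schwarz in the `V`-inner product,
`(xq ⬝ Δ)² ≤ (xqᵀ V⁻¹ xq)(Δᵀ V Δ)`, finishes the proof.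
-/

open MeasureTheory Matrix

theorem StrongConvexOn.mul_sq_le_deriv_sub_mul {f : ℝ → ℝ} {m : ℝ} (hf : Differentiable ℝ f)
    (hsc : StrongConvexOn Set.univ m f) (a b : ℝ) :
    m * (a - b) ^ 2 ≤ (deriv f a - deriv f b) * (a - b) := by
  have hconv : ConvexOn ℝ Set.univ (fun u => f u - m / 2 * u ^ 2) := by
    simpa [Real.norm_eq_abs, sq_abs] using strongConvexOn_iff_convex.mp hsc
  have hderiv : ∀ u, HasDerivAt (fun u => f u - m / 2 * u ^ 2) (deriv f u - m * u) u :=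
    fun u => ((hf u).hasDerivAt.sub ((hasDerivAt_pow 2 u).const_mul (m / 2))).congr_deriv
      (by push_cast; ring)
  have hmono : Monotone fun u => deriv f u - m * u := fun u v huv => by
    simpa only [(hderiv _).deriv] using
      hconv.monotoneOn_deriv (fun u _ => (hderiv u).differentiableAt) trivial trivial huv
  rcases le_total a b with h | h
  · nlinarith [hmono h]
  · nlinarith [hmono h]

theorem StrongConvexOn.mul_sq_le_integral_deriv_sub_mul {Y : Type*} [MeasurableSpace Y]
    {ρ : Measure Y} [IsProbabilityMeasure ρ] {g : Y → ℝ → ℝ} {m : ℝ}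
    (hg : ∀ v, Differentiable ℝ (g v)) (hsc : ∀ v, StrongConvexOn Set.univ m (g v)) {a b : ℝ}
    (ha : Integrable (fun v => deriv (g v) a) ρ) (hb : Integrable (fun v => deriv (g v) b) ρ) :
    m * (a - b) ^ 2 ≤ ((∫ v, deriv (g v) a ∂ρ) - ∫ v, deriv (g v) b ∂ρ) * (a - b) := by
  rw [← integral_sub ha hb, ← integral_mul_const]
  calc m * (a - b) ^ 2 = ∫ _, m * (a - b) ^ 2 ∂ρ := by simp
    _ ≤ _ := integral_mono (integrable_const _) ((ha.sub hb).mul_const _)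
        fun v => (hsc v).mul_sq_le_deriv_sub_mul (hg v) a b

namespace Matrix

variable {ι n : Type*} [Fintype n]

theorem dotProduct_sub_self_add_two_mul (a b : n → ℝ) :
    (a - b) ⬝ᵥ (a - b) + 2 * (b ⬝ᵥ (a - b)) = a ⬝ᵥ a - b ⬝ᵥ b := by
  simp only [dotProduct_sub, sub_dotProduct, dotProduct_comm b a]
  ring

theorem PosSemidef.dotProduct_mulVec_sq_le {M : Matrix n n ℝ} (hM : M.PosSemidef) (u w : n → ℝ) :
    (u ⬝ᵥ M *ᵥ w) ^ 2 ≤ (u ⬝ᵥ M *ᵥ u) * (w ⬝ᵥ M *ᵥ w) := by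
  let := M.toSeminormedAddCommGroup hM
  let := M.toInnerProductSpace hM
  have h := real_inner_mul_inner_self_le u w
  -- the inner product induced by `M` is `⟪u, w⟫ = (M *ᵥ w) ⬝ᵥ star u`
  change (M *ᵥ w) ⬝ᵥ star u * ((M *ᵥ w) ⬝ᵥ star u) ≤
    (M *ᵥ u) ⬝ᵥ star u * ((M *ᵥ w) ⬝ᵥ star w) at h
  simpa only [star_trivial, dotProduct_comm (M *ᵥ _), sq] using h

variable [DecidableEq n]

theorem PosDef.dotProduct_sq_le {M : Matrix n n ℝ} (hM : M.PosDef) (u w : n → ℝ) :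
    (u ⬝ᵥ w) ^ 2 ≤ (u ⬝ᵥ M⁻¹ *ᵥ u) * (w ⬝ᵥ M *ᵥ w) := by
  have hcancel : M⁻¹ *ᵥ M *ᵥ w = w := by
    rw [mulVec_mulVec, nonsing_inv_mul _ ((isUnit_iff_isUnit_det M).mp hM.isUnit), one_mulVec]
  simpa [hcancel, dotProduct_comm (M *ᵥ w)] using
    hM.inv.posSemidef.dotProduct_mulVec_sq_le u (M *ᵥ w)

theorem dotProduct_smul_one_add_sum_vecMulVec_mulVec (lam μ : ℝ) (S : Finset ι) (x : ι → n → ℝ)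
    (w : n → ℝ) :
    w ⬝ᵥ (lam • (1 : Matrix n n ℝ) + ∑ s ∈ S, μ • vecMulVec (x s) (x s)) *ᵥ w
      = lam * (w ⬝ᵥ w) + ∑ s ∈ S, μ * (x s ⬝ᵥ w) ^ 2 := by
  simp only [add_mulVec, sum_mulVec, smul_mulVec, one_mulVec, vecMulVec_mulVec, dotProduct_add,
    dotProduct_sum, dotProduct_smul, op_smul_eq_smul, smul_eq_mul, dotProduct_comm w (x _)]
  congr 1
  exact Finset.sum_congr rfl fun s _ => by ring

theorem posDef_smul_one_add_sum_vecMulVec {lam μ : ℝ} (hlam : 0 < lam) (hμ : 0 ≤ μ)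
    (S : Finset ι) (x : ι → n → ℝ) :
    (lam • (1 : Matrix n n ℝ) + ∑ s ∈ S, μ • vecMulVec (x s) (x s)).PosDef :=
  (PosDef.one.smul hlam).add_posSemidef <|
    posSemidef_sum S fun s _ => (posSemidef_vecMulVec_self_star (x s)).smul hμ

end Matrix

theorem bias_estimate_general
    {Y : Type*} [MeasurableSpace Y] {d : ℕ} (t : ℕ)
    (μ lam : ℝ) (hμ : 0 < μ) (hlam : 0 < lam)
    -- conditional laws of y_s given ℱ_{s-1} (the fixed covariates being x s)
    (ρ : ℕ → Measure Y) [∀ s, IsProbabilityMeasure (ρ s)]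
    -- covariates and the query point
    (x : ℕ → Fin d → ℝ) (xq : Fin d → ℝ)
    -- the parameter set: compact, convex, inside the ℓ2-ball of radius B
    (Θ : Set (Fin d → ℝ))
    (θstar : Fin d → ℝ) (hθstar : θstar ∈ Θ)
    -- per-sample negative log-likelihood: −log p_θ(y|x_s) = g s y (x_s ⬝ θ)
    (g : ℕ → Y → ℝ → ℝ)
    (hgdiff : ∀ s v, Differentiable ℝ (g s v))
    (hgsc : ∀ s v, StrongConvexOn Set.univ μ (g s v))
    (hint : ∀ s θ, Integrable (fun v => deriv (g s v) (x s ⬝ᵥ θ)) (ρ s))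
    -- score identity: the expected score vanishes at the true parameter
    (hscore : ∀ s ∈ Finset.Icc 1 t, ∫ v, deriv (g s v) (x s ⬝ᵥ θstar) ∂ρ s = 0)
    -- the error-free estimate θ̂_t^×, its normal-cone element, and its first-order condition
    (θtimes : Fin d → ℝ)
    (n : Fin d → ℝ) (hn : ∀ z ∈ Θ, n ⬝ᵥ (z - θtimes) ≤ 0)
    (hFOC : (∑ s ∈ Finset.Icc 1 t, (∫ v, deriv (g s v) (x s ⬝ᵥ θtimes) ∂ρ s) • x s)
        + (2 * lam) • θtimes + n = 0)
    -- the regularized design matrix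
    (V : Matrix (Fin d) (Fin d) ℝ)
    (hV : V = lam • (1 : Matrix (Fin d) (Fin d) ℝ)
        + ∑ s ∈ Finset.Icc 1 t, μ • Matrix.vecMulVec (x s) (x s)) :
    (xq ⬝ᵥ (θstar - θtimes)) ^ 2 ≤ 2 * lam * (θstar ⬝ᵥ θstar) * (xq ⬝ᵥ V⁻¹ *ᵥ xq) := by
  set D := θstar - θtimes
  set score := fun s => ∫ v, deriv (g s v) (x s ⬝ᵥ θtimes) ∂ρ s
  have hVpos : V.PosDef := hV ▸ posDef_smul_one_add_sum_vecMulVec hlam hμ.le _ x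
  have hmono : ∀ s ∈ Finset.Icc 1 t, μ * (x s ⬝ᵥ D) ^ 2 ≤ -(score s * (x s ⬝ᵥ D)) := by
    intro s hs
    simpa [hscore s hs, D, dotProduct_sub] using
      StrongConvexOn.mul_sq_le_integral_deriv_sub_mul (hgdiff s) (hgsc s)
        (hint s θstar) (hint s θtimes)
  have hfoc :
      ∑ s ∈ Finset.Icc 1 t, score s * (x s ⬝ᵥ D) + 2 * lam * (θtimes ⬝ᵥ D) + n ⬝ᵥ D = 0 := by
    simpa only [add_dotProduct, zero_dotProduct, sum_dotProduct, smul_dotProduct, smul_eq_mul]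
      using congrArg (· ⬝ᵥ D) hFOC
  have hquad : D ⬝ᵥ V *ᵥ D ≤ 2 * lam * (θstar ⬝ᵥ θstar) := by
    rw [hV, dotProduct_smul_one_add_sum_vecMulVec_mulVec]
    have hsum := (Finset.sum_le_sum hmono).trans_eq (Finset.sum_neg_distrib _)
    have hnD : n ⬝ᵥ D ≤ 0 := hn θstar hθstar
    have hnorm : lam * (D ⬝ᵥ D) + 2 * lam * (θtimes ⬝ᵥ D)
        = lam * (θstar ⬝ᵥ θstar) - lam * (θtimes ⬝ᵥ θtimes) := by
      linear_combination lam * dotProduct_sub_self_add_two_mul θstar θtimes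
    have hself : ∀ θ : Fin d → ℝ, 0 ≤ lam * (θ ⬝ᵥ θ) := fun θ =>
      mul_nonneg hlam.le (by simpa using dotProduct_self_star_nonneg θ)
    linarith [hself θstar, hself θtimes]
  calc (xq ⬝ᵥ D) ^ 2 ≤ (xq ⬝ᵥ V⁻¹ *ᵥ xq) * (D ⬝ᵥ V *ᵥ D) := hVpos.dotProduct_sq_le xq D
    _ ≤ (xq ⬝ᵥ V⁻¹ *ᵥ xq) * (2 * lam * (θstar ⬝ᵥ θstar)) :=
      mul_le_mul_of_nonneg_left hquad (hVpos.inv.posSemidef.dotProduct_mulVec_nonneg xq)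
    _ = _ := mul_comm _ _

/-- Theorem 2, bias estimate.
Suppose the negative log-likelihood of the `s`-th observation has the form
`−log p_θ(y_s|x_s) = g_s(y_s, x_s^⊤θ)` with `g_s(y, ·) : ℝ → ℝ` `μ`-strongly convex, and let the
regularizer be `ψ_t(θ) = λ‖θ‖₂²`.  The conditional expectation `E[· | ℱ_{s−1}]` of a function of
`y_s` is the integral against the conditional law `ρ s` of `y_s` (whose density is
`p_{θ*}(·|x_s)`); the score identity `E[∂_u g_s(y_s, u)|_{u = x_s^⊤θ*}] = 0` holds.  Let the
error-free estimate `θ̂_t^× ∈ Θ` solve the first-order optimality condition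
`Σ_{s=1}^t E[∇_θ log p_{θ̂_t^×}(y_s|x_s) | ℱ_{s−1}] − ∇ψ_t(θ̂_t^×) − n = 0`
with `n` in the normal cone of `Θ` at `θ̂_t^×`, and set
`bias_x²(θ̂_t) := (x^⊤(θ* − θ̂_t^×))²`.  Then
`bias_x²(θ̂_t) ≤ 2λ‖θ*‖₂² · x^⊤ (V_t^{μ;λ})^{-1} x`, where
`V_t^{μ;λ} = Σ_{s=1}^t μ x_s x_s^⊤ + λ I`. -/
theorem bias_estimate
    {Y : Type*} [MeasurableSpace Y] {d : ℕ} (t : ℕ)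
    (μ lam B : ℝ) (hμ : 0 < μ) (hlam : 0 < lam) (hB : 0 < B)
    -- conditional laws of y_s given ℱ_{s-1} (the fixed covariates being x s)
    (ρ : ℕ → Measure Y) [∀ s, IsProbabilityMeasure (ρ s)]
    -- covariates and the query point
    (x : ℕ → Fin d → ℝ) (xq : Fin d → ℝ)
    -- the parameter set: compact, convex, inside the ℓ2-ball of radius B
    (Θ : Set (Fin d → ℝ)) (hconv : Convex ℝ Θ) (hcomp : IsCompact Θ)
    (hΘball : ∀ θ ∈ Θ, θ ⬝ᵥ θ ≤ B ^ 2)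
    (θstar : Fin d → ℝ) (hθstar : θstar ∈ Θ)
    -- per-sample negative log-likelihood: −log p_θ(y|x_s) = g s y (x_s ⬝ θ)
    (g : ℕ → Y → ℝ → ℝ)
    (hgdiff : ∀ s v, Differentiable ℝ (g s v))
    (hgsc : ∀ s v, StrongConvexOn Set.univ μ (g s v))
    (hint : ∀ s θ, Integrable (fun v => deriv (g s v) (x s ⬝ᵥ θ)) (ρ s))
    -- score identity: the expected score vanishes at the true parameter
    (hscore : ∀ s ∈ Finset.Icc 1 t, ∫ v, deriv (g s v) (x s ⬝ᵥ θstar) ∂ρ s = 0)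
    -- the error-free estimate θ̂_t^×, its normal-cone element, and its first-order condition
    (θtimes : Fin d → ℝ) (hθtimes : θtimes ∈ Θ)
    (n : Fin d → ℝ) (hn : ∀ z ∈ Θ, n ⬝ᵥ (z - θtimes) ≤ 0)
    (hFOC : (∑ s ∈ Finset.Icc 1 t, (∫ v, deriv (g s v) (x s ⬝ᵥ θtimes) ∂ρ s) • x s)
        + (2 * lam) • θtimes + n = 0)
    -- the regularized design matrix
    (V : Matrix (Fin d) (Fin d) ℝ)
    (hV : V = lam • (1 : Matrix (Fin d) (Fin d) ℝ)
        + ∑ s ∈ Finset.Icc 1 t, μ • Matrix.vecMulVec (x s) (x s)) :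
    (xq ⬝ᵥ (θstar - θtimes)) ^ 2 ≤ 2 * lam * (θstar ⬝ᵥ θstar) * (xq ⬝ᵥ V⁻¹ *ᵥ xq) :=
  bias_estimate_general t μ lam hμ hlam ρ x xq Θ θstar hθstar g hgdiff hgsc hint hscore θtimes n hn
    hFOC V hV
end

section
/- Let f : ℝ^d → ℝ be a Legendre function with int(dom f) = ℝ^d (i.e., f is differentiable and strictly convex with bijective gradient). Then for all x, y ∈ ℝ^d: D_f(x, y) = (D_{f,x})^*(∇f(y) − ∇f(x)), where D_{f,x}(a) := D_f(x + a, x) and (·)^* denotes the Legendre–Fenchel conjugate, (D_{f,x})^*(u) = sup_{a∈ℝ^d} (⟨a, u⟩ − D_{f,x}(a)). -/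
/-!
Expanding the definitions gives the identity
`⟪a, ∇f y - ∇f x⟫ - D_f(x + a, x) = D_f(x, y) - D_f(x + a, y)`,
so the supremum equals `D_f(x, y) - inf_a D_f(x + a, y)`. By the first-order characterisation
of convexity `D_f(·, y) ≥ 0`, and the infimum `0` is attained at `a = y - x`.
-/

open scoped RealInnerProductSpace

open AffineMap in
theorem ConvexOn.add_apply_sub_le_of_hasFDerivAt {E : Type*} [NormedAddCommGroup E]
    [NormedSpace ℝ E] {s : Set E} {f : E → ℝ} {f' : E →L[ℝ] ℝ} {z w : E}
    (hf : ConvexOn ℝ s f) (hz : z ∈ s) (hw : w ∈ s) (hf' : HasFDerivAt f f' z) :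
    f z + f' (w - z) ≤ f w := by
  set ℓ : ℝ →ᵃ[ℝ] E := lineMap z w
  have hℓ0 : ℓ 0 = z := lineMap_apply_zero z w
  have hℓ1 : ℓ 1 = w := lineMap_apply_one z w
  have hline : ConvexOn ℝ (ℓ ⁻¹' s) (f ∘ ℓ) := hf.comp_affineMap ℓ
  have hderiv : HasDerivAt (f ∘ ℓ) (f' (w - z)) 0 :=
    HasFDerivAt.comp_hasDerivAt (0 : ℝ) (hℓ0 ▸ hf') hasDerivAt_lineMap
  have hmem0 : (0 : ℝ) ∈ ℓ ⁻¹' s := by rwa [Set.mem_preimage, hℓ0]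
  have hmem1 : (1 : ℝ) ∈ ℓ ⁻¹' s := by rwa [Set.mem_preimage, hℓ1]
  have hslope := hline.le_slope_of_hasDerivAt hmem0 hmem1 zero_lt_one hderiv
  simp only [slope_def_field, Function.comp_apply, hℓ0, hℓ1, sub_zero, div_one] at hslope
  linarith

section Bregman

variable {E : Type*} [NormedAddCommGroup E] [InnerProductSpace ℝ E] [CompleteSpace E]

noncomputable def bregmanDiv (f : E → ℝ) (a b : E) : ℝ :=
  f a - f b - ⟪gradient f b, a - b⟫

@[simp]
theorem bregmanDiv_self (f : E → ℝ) (a : E) : bregmanDiv f a a = 0 := by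
  simp [bregmanDiv]

theorem bregmanDiv_nonneg {f : E → ℝ} (hf : ConvexOn ℝ Set.univ f) {b : E}
    (hb : DifferentiableAt ℝ f b) (a : E) : 0 ≤ bregmanDiv f a b := by
  have hsupport := hf.add_apply_sub_le_of_hasFDerivAt (Set.mem_univ b) (Set.mem_univ a)
    hb.hasGradientAt.hasFDerivAt
  rw [InnerProductSpace.toDual_apply_apply] at hsupport
  rw [bregmanDiv]
  linarith

theorem inner_sub_sub_bregmanDiv_add (f : E → ℝ) (x y a : E) :
    ⟪a, gradient f y - gradient f x⟫ - bregmanDiv f (x + a) x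
      = bregmanDiv f x y - bregmanDiv f (x + a) y := by
  simp only [bregmanDiv, add_sub_cancel_left, inner_sub_right, inner_add_right,
    real_inner_comm a]
  ring

end Bregman

theorem bregman_divergence_fenchel_dual_general
    {d : ℕ} (f : EuclideanSpace ℝ (Fin d) → ℝ)
    (hdiff : Differentiable ℝ f)
    (hconv : StrictConvexOn ℝ Set.univ f)
    (Df : EuclideanSpace ℝ (Fin d) → EuclideanSpace ℝ (Fin d) → ℝ)
    (hDf : ∀ a b, Df a b = f a - f b - ⟪gradient f b, a - b⟫)
    (x y : EuclideanSpace ℝ (Fin d)) :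
    Df x y = ⨆ a : EuclideanSpace ℝ (Fin d),
      (⟪a, gradient f y - gradient f x⟫ - Df (x + a) x) := by
  obtain rfl : Df = bregmanDiv f := funext₂ hDf
  simp_rw [inner_sub_sub_bregmanDiv_add]
  have hle : ∀ a, bregmanDiv f x y - bregmanDiv f (x + a) y ≤ bregmanDiv f x y :=
    fun a => sub_le_self _ (bregmanDiv_nonneg hconv.convexOn (hdiff y) _)
  refine le_antisymm ?_ (ciSup_le hle)
  refine le_ciSup_of_le ⟨_, Set.forall_mem_range.2 hle⟩ (y - x) ?_
  simp

/-- Lemma 2/Lemma 2.1 of Chowdhury et al., Bregman duality.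
Let `f : ℝ^d → ℝ` be a Legendre function with full domain, i.e. differentiable and strictly
convex with bijective gradient.  Then for all `x, y`:
`D_f(x, y) = (D_{f,x})^*(∇f(y) − ∇f(x))`, where `D_{f,x}(a) := D_f(x + a, x)` and `(·)^*`
is the Legendre–Fenchel conjugate `(D_{f,x})^*(u) = sup_a (⟨a, u⟩ − D_{f,x}(a))`. -/
theorem bregman_divergence_fenchel_dual
    {d : ℕ} (f : EuclideanSpace ℝ (Fin d) → ℝ)
    (hdiff : Differentiable ℝ f)
    (hconv : StrictConvexOn ℝ Set.univ f)
    (hbij : Function.Bijective (gradient f))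
    (Df : EuclideanSpace ℝ (Fin d) → EuclideanSpace ℝ (Fin d) → ℝ)
    (hDf : ∀ a b, Df a b = f a - f b - ⟪gradient f b, a - b⟫)
    (x y : EuclideanSpace ℝ (Fin d)) :
    Df x y = ⨆ a : EuclideanSpace ℝ (Fin d),
      (⟪a, gradient f y - gradient f x⟫ - Df (x + a) x) :=
  bregman_divergence_fenchel_dual_general f hdiff hconv Df hDf x y
end

section
/- Let A : ℝ → ℝ be twice differentiable with μ ≤ A''(z) ≤ L for all z ∈ [−B, B]. Then for any a ∈ [−B, B], any Δ with a + Δ ∈ [−B, B], and any γ ∈ (0, μ/(2L)]: A(a + γΔ) − A(a) − A'(a)·γΔ ≤ (γ/2) · [A(a + Δ) − A(a) − A'(a)·Δ]. -/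
/-!
Strong convexity bounds the Taylor remainder `A(a + Δ) − A(a) − A'(a)Δ` below by `μΔ²/2`, and
smoothness bounds the remainder at `a + γΔ` above by `Lγ²Δ²/2`; since `Lγ ≤ μ/2`, the latter is at
most `γ/2 · μΔ²/2`. Both bounds come from the tangent-line inequality for the convex functions
`A − μx²/2` and `Lx²/2 − A`.
-/

theorem ConvexOn.add_mul_sub_le_of_hasDerivAt {S : Set ℝ} {f : ℝ → ℝ} {f' x y : ℝ}
    (hfc : ConvexOn ℝ S f) (hx : x ∈ S) (hy : y ∈ S) (hf : HasDerivAt f f' x) :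
    f x + f' * (y - x) ≤ f y := by
  rcases lt_trichotomy x y with hxy | rfl | hyx
  · have := hfc.le_slope_of_hasDerivAt hx hy hxy hf
    rw [slope_def_field, le_div_iff₀ (sub_pos.2 hxy)] at this
    linarith
  · simp
  · have := hfc.slope_le_of_hasDerivAt hy hx hyx hf
    rw [slope_def_field, div_le_iff₀ (sub_pos.2 hyx)] at this
    linarith

section SecondDerivativeBounds

variable {S : Set ℝ} {f : ℝ → ℝ} {f' m M x y : ℝ}

theorem hasDerivAt_sub_mul_sq (hf : HasDerivAt f f' x) (m : ℝ) :
    HasDerivAt (fun x ↦ f x - m / 2 * x ^ 2) (f' - m * x) x :=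
  (hf.sub ((hasDerivAt_pow 2 x).const_mul (m / 2))).congr_deriv (by push_cast; ring)

theorem convexOn_sub_mul_sq_of_le_deriv_deriv (hS : Convex ℝ S) (hf : Differentiable ℝ f)
    (hf' : Differentiable ℝ (deriv f)) (hm : ∀ z ∈ S, m ≤ deriv (deriv f) z) :
    ConvexOn ℝ S (fun x ↦ f x - m / 2 * x ^ 2) :=
  convexOn_of_hasDerivWithinAt2_nonneg hS
    (fun x _ ↦ (hasDerivAt_sub_mul_sq (hf x).hasDerivAt m).continuousAt.continuousWithinAt)
    (fun x _ ↦ (hasDerivAt_sub_mul_sq (hf x).hasDerivAt m).hasDerivWithinAt)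
    (fun x _ ↦ (((hf' x).hasDerivAt.sub ((hasDerivAt_id x).const_mul m)).congr_deriv
      (by rw [mul_one])).hasDerivWithinAt)
    (fun x hx ↦ sub_nonneg.2 (hm x (interior_subset hx)))

theorem mul_sq_le_sub_sub_deriv_mul_of_le_deriv_deriv (hS : Convex ℝ S)
    (hf : Differentiable ℝ f) (hf' : Differentiable ℝ (deriv f))
    (hm : ∀ z ∈ S, m ≤ deriv (deriv f) z) (hx : x ∈ S) (hy : y ∈ S) :
    m / 2 * (y - x) ^ 2 ≤ f y - f x - deriv f x * (y - x) := by
  have := (convexOn_sub_mul_sq_of_le_deriv_deriv hS hf hf' hm).add_mul_sub_le_of_hasDerivAt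
    hx hy (hasDerivAt_sub_mul_sq (hf x).hasDerivAt m)
  linarith

theorem sub_sub_deriv_mul_le_mul_sq_of_deriv_deriv_le (hS : Convex ℝ S)
    (hf : Differentiable ℝ f) (hf' : Differentiable ℝ (deriv f))
    (hM : ∀ z ∈ S, deriv (deriv f) z ≤ M) (hx : x ∈ S) (hy : y ∈ S) :
    f y - f x - deriv f x * (y - x) ≤ M / 2 * (y - x) ^ 2 := by
  have hneg' : deriv (-f) = -deriv f := deriv.neg'
  have := mul_sq_le_sub_sub_deriv_mul_of_le_deriv_deriv (f := -f) (m := -M) hS hf.neg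
    (by rw [hneg']; exact hf'.neg) (fun z hz ↦ by simpa [hneg', deriv.neg'] using hM z hz) hx hy
  simp only [Pi.neg_apply, hneg'] at this
  linarith

end SecondDerivativeBounds

theorem one_dimensional_subhomogeneity_general
    (A : ℝ → ℝ) (μ L B : ℝ) (hμ : 0 < μ)
    (hA : ∀ z : ℝ, DifferentiableAt ℝ A z)
    (hA' : ∀ z : ℝ, DifferentiableAt ℝ (deriv A) z)
    (hbounds : ∀ z ∈ Set.Icc (-B) B, μ ≤ deriv (deriv A) z ∧ deriv (deriv A) z ≤ L)
    (a Δ γ : ℝ) (ha : a ∈ Set.Icc (-B) B) (haΔ : a + Δ ∈ Set.Icc (-B) B)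
    (hγ : γ ∈ Set.Ioc 0 (μ / (2 * L))) :
    A (a + γ * Δ) - A a - deriv A a * (γ * Δ)
      ≤ γ / 2 * (A (a + Δ) - A a - deriv A a * Δ) := by
  obtain ⟨hγ₀, hγμL⟩ := hγ
  have hμL : μ ≤ L := (hbounds a ha).1.trans (hbounds a ha).2
  have hLγ : L * γ ≤ μ / 2 := by
    rw [le_div_iff₀ (by linarith)] at hγμL
    linarith
  have hγ₁ : γ ≤ 1 := by nlinarith
  have haγΔ : a + γ * Δ ∈ Set.Icc (-B) B := (convex_Icc _ _).add_smul_mem ha haΔ ⟨hγ₀.le, hγ₁⟩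
  have hlower := mul_sq_le_sub_sub_deriv_mul_of_le_deriv_deriv (convex_Icc _ _) hA hA'
    (fun z hz ↦ (hbounds z hz).1) ha haΔ
  have hupper := sub_sub_deriv_mul_le_mul_sq_of_deriv_deriv_le (convex_Icc _ _) hA hA'
    (fun z hz ↦ (hbounds z hz).2) ha haγΔ
  simp only [add_sub_cancel_left] at hlower hupper
  calc A (a + γ * Δ) - A a - deriv A a * (γ * Δ) ≤ L / 2 * (γ * Δ) ^ 2 := hupper
    _ = γ / 2 * (L * γ) * Δ ^ 2 := by ring
    _ ≤ γ / 2 * (μ / 2) * Δ ^ 2 := by gcongr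
    _ = γ / 2 * (μ / 2 * Δ ^ 2) := by ring
    _ ≤ γ / 2 * (A (a + Δ) - A a - deriv A a * Δ) := by gcongr

/-- Lemma 4, one-dimensional sub-homogeneity.
Let `A : ℝ → ℝ` be twice differentiable with `μ ≤ A''(z) ≤ L` for all `z ∈ [−B, B]`.
Then for any `a ∈ [−B, B]`, any `Δ` with `a + Δ ∈ [−B, B]`, and any `γ ∈ (0, μ/(2L)]`:
`A(a + γΔ) − A(a) − A'(a) γΔ ≤ (γ/2) (A(a + Δ) − A(a) − A'(a) Δ)`. -/
theorem one_dimensional_subhomogeneity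
    (A : ℝ → ℝ) (μ L B : ℝ) (hB : 0 < B) (hμ : 0 < μ)
    (hA : ∀ z : ℝ, DifferentiableAt ℝ A z)
    (hA' : ∀ z : ℝ, DifferentiableAt ℝ (deriv A) z)
    (hbounds : ∀ z ∈ Set.Icc (-B) B, μ ≤ deriv (deriv A) z ∧ deriv (deriv A) z ≤ L)
    (a Δ γ : ℝ) (ha : a ∈ Set.Icc (-B) B) (haΔ : a + Δ ∈ Set.Icc (-B) B)
    (hγ : γ ∈ Set.Ioc 0 (μ / (2 * L))) :
    A (a + γ * Δ) - A a - deriv A a * (γ * Δ)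
      ≤ γ / 2 * (A (a + Δ) - A a - deriv A a * Δ) :=
  one_dimensional_subhomogeneity_general A μ L B hμ hA hA' hbounds a Δ γ ha haΔ hγ
end

section
/- In the GLM, define for r ∈ ℝ^d the processes M_j(r) = exp( ∇f_j(θ*)^⊤ r − A'(x_j^⊤θ*)·x_j^⊤r − A(x_j^⊤θ* − x_j^⊤r) + A(x_j^⊤θ*) ) and N_j(r) = exp( ∇f_j(θ*)^⊤ r − (L/2)·r^⊤ x_j x_j^⊤ r ). Then E[M_j(r) | F_{j−1}] = 1 for every r, and if A is L-smooth then E[N_j(r) | F_{j−1}] ≤ 1 for every r. -/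
open MeasureTheory Matrix

/-!
Conditionally on `ℱ_{j-1}`, the variable `M_j(r)` is the likelihood ratio
`p_{θ* - r}(y_j | x_j) / p_{θ*}(y_j | x_j)`, whose expectation under `p_{θ*}` is the total mass
of the density `p_{θ* - r}`, namely `1`. Smoothness of `A` gives `N_j(r) ≤ M_j(r)` pointwise,
hence `E[N_j(r) | ℱ_{j-1}] ≤ 1`.

Since `T` need not be measurable, it is replaced by the measurable `T' = log (h e^T / h)` (built
from measurable versions of `h` and `h e^T`), which agrees with `T` off a measurable set carrying
no mass under the base density `h`; `y_j` almost surely avoids that set.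
-/

section ExponentialFamily

variable {α : Type*}

/-- The likelihood ratio `p_{η - s}(v) / p_η(v)` of the exponential family
`p_η(v) = h v * exp (T v * η - A η)`. -/
noncomputable def expFamilyRatio (A : ℝ → ℝ) (T : α → ℝ) (η s : ℝ) (v : α) : ℝ :=
  Real.exp (-(T v * s) - A (η - s) + A η)

theorem expFamilyRatio_mul (A : ℝ → ℝ) (T : α → ℝ) (b η s : ℝ) (v : α) :
    expFamilyRatio A T η s v * (b * Real.exp (T v * η - A η)) =
      b * Real.exp (T v * (η - s) - A (η - s)) := by
  rw [expFamilyRatio, mul_left_comm, ← Real.exp_add]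
  ring_nf

variable [MeasurableSpace α] {μ : Measure α} {h T : α → ℝ}

theorem integrable_mul_exp_of_integral_eq_one {a : ℝ → ℝ}
    (hnorm : ∀ η, ∫ v, h v * Real.exp (T v * η - a η) ∂μ = 1) (η : ℝ) :
    Integrable (fun v => h v * Real.exp (T v * η)) μ := by
  have hint : Integrable (fun v => h v * Real.exp (T v * η - a η)) μ :=
    Integrable.of_integral_ne_zero (by rw [hnorm η]; exact one_ne_zero)
  convert hint.const_mul (Real.exp (a η)) using 2 with v
  rw [Real.exp_sub]
  field_simp

theorem exists_measurable_eq_off_of_aestronglyMeasurable_mul_exp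
    (hh : AEStronglyMeasurable h μ)
    (hhT : AEStronglyMeasurable (fun v => h v * Real.exp (T v)) μ) :
    ∃ T' : α → ℝ, Measurable T' ∧ ∃ S : Set α, MeasurableSet S ∧
      (∀ v ∉ S, T v = T' v) ∧ ∀ᵐ v ∂μ, v ∈ S → h v = 0 := by
  set hm := hh.mk h
  set fm := hhT.mk _
  have hgood : ∀ᵐ v ∂μ, h v = hm v ∧ h v * Real.exp (T v) = fm v :=
    hh.ae_eq_mk.and hhT.ae_eq_mk
  set N := toMeasurable μ {v | ¬ (h v = hm v ∧ h v * Real.exp (T v) = fm v)}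
  have hN : ∀ᵐ v ∂μ, v ∉ N :=
    measure_eq_zero_iff_ae_notMem.mp (by rw [measure_toMeasurable]; exact ae_iff.mp hgood)
  refine ⟨fun v => Real.log (fm v / hm v),
    Real.measurable_log.comp
      (hhT.stronglyMeasurable_mk.measurable.div hh.stronglyMeasurable_mk.measurable),
    N ∪ {v | hm v = 0},
    (measurableSet_toMeasurable _ _).union
      (hh.stronglyMeasurable_mk.measurable (measurableSet_singleton 0)), ?_, ?_⟩
  · intro v hv
    simp only [Set.mem_union, Set.mem_ofPred_eq, not_or] at hv
    obtain ⟨hvh, hvf⟩ : h v = hm v ∧ h v * Real.exp (T v) = fm v := by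
      by_contra hbad
      exact hv.1 (subset_toMeasurable _ _ hbad)
    show T v = Real.log (fm v / hm v)
    rw [← hvf, ← hvh, mul_div_cancel_left₀ _ (hvh ▸ hv.2), Real.log_exp]
  · filter_upwards [hgood, hN] with v hv hvN hvS
    rcases hvS with hvS | hvS
    · exact absurd hvS hvN
    · exact hv.1.trans hvS

theorem integral_expFamilyRatio_mul {A : ℝ → ℝ} {T' : α → ℝ}
    (hT' : ∀ᵐ v ∂μ, h v ≠ 0 → T v = T' v)
    (hnorm : ∀ η, ∫ v, h v * Real.exp (T v * η - A η) ∂μ = 1) (η s : ℝ) :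
    ∫ v, expFamilyRatio A T' η s v * (h v * Real.exp (T v * η - A η)) ∂μ = 1 := by
  rw [← hnorm (η - s)]
  refine integral_congr_ae ?_
  filter_upwards [hT'] with v hv
  by_cases hv0 : h v = 0
  · simp [hv0]
  · rw [hv hv0, expFamilyRatio_mul]

theorem measurable_expFamilyRatio {Ω : Type*} [mΩ : MeasurableSpace Ω] {A : ℝ → ℝ}
    {T : α → ℝ} (hA : Measurable A) (hT : Measurable T) {η s : Ω → ℝ} (hη : Measurable η)
    (hs : Measurable s) :
    Measurable fun q : Ω × α => expFamilyRatio A T (η q.1) (s q.1) q.2 := by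
  unfold expFamilyRatio
  fun_prop

end ExponentialFamily

section ConditionalDensity

def HasCondDensity {Ω : Type*} [MeasurableSpace Ω] (P : Measure Ω) (m : MeasurableSpace Ω)
    (Y : Ω → ℝ) (q : Ω → ℝ → ℝ) : Prop :=
  ∀ g : Ω × ℝ → ℝ, StronglyMeasurable[m.prod (borel ℝ)] g →
    Integrable (fun ω => g (ω, Y ω)) P →
    P[fun ω => g (ω, Y ω)|m] =ᵐ[P] fun ω => ∫ v, g (ω, v) * q ω v

variable {Ω : Type*} {m m₀ : MeasurableSpace Ω} {P : Measure[m₀] Ω} {Y : Ω → ℝ}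
  {q : Ω → ℝ → ℝ}

theorem HasCondDensity.condExp_eq_one {M : Ω → ℝ} (hY : HasCondDensity P m Y q)
    {g : Ω × ℝ → ℝ} (hg : StronglyMeasurable[m.prod (borel ℝ)] g)
    (hgM : (fun ω => g (ω, Y ω)) =ᵐ[P] M) (hM : Integrable M P)
    (hq : ∀ ω, ∫ v, g (ω, v) * q ω v = 1) :
    P[M|m] =ᵐ[P] fun _ => 1 :=
  (condExp_congr_ae hgM.symm).trans <|
    (hY g hg (hM.congr hgM.symm)).trans (.of_forall hq)

theorem HasCondDensity.ae_notMem [IsFiniteMeasure P] (hY : HasCondDensity P m Y q)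
    (hm : m ≤ m₀) (hYm : Measurable[m₀] Y) {S : Set ℝ} (hS : MeasurableSet S)
    (hq : ∀ ω, ∀ᵐ v, v ∈ S → q ω v = 0) :
    ∀ᵐ ω ∂P, Y ω ∉ S := by
  have hind : Integrable (fun ω => S.indicator (1 : ℝ → ℝ) (Y ω)) P :=
    (integrable_indicator_iff (hYm hS)).mpr (integrable_const 1).integrableOn
  have hcond : P[fun ω => S.indicator (1 : ℝ → ℝ) (Y ω)|m] =ᵐ[P] 0 := by
    refine (hY (fun q => S.indicator (1 : ℝ → ℝ) q.2)
      ((measurable_one.indicator hS).comp measurable_snd).stronglyMeasurable hind).trans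
      (.of_forall fun ω => integral_eq_zero_of_ae ?_)
    filter_upwards [hq ω] with v hv
    by_cases hvS : v ∈ S <;> simp [hvS, hv]
  have hmass : P.real (Y ⁻¹' S) = 0 := by
    rw [← integral_indicator_one (hYm hS), ← integral_condExp hm]
    change ∫ ω, P[fun ω => S.indicator (1 : ℝ → ℝ) (Y ω)|m] ω ∂P = 0
    rw [integral_congr_ae hcond]
    exact integral_zero _ _
  exact measure_eq_zero_iff_ae_notMem.mp ((measureReal_eq_zero_iff).mp hmass)

end ConditionalDensity

/-- Lemma 6, martingale increment.
In the GLM define, for `r ∈ ℝ^d`,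
`M_j(r) = exp(∇f_j(θ*)^⊤r − A'(x_j^⊤θ*)x_j^⊤r − A(x_j^⊤θ* − x_j^⊤r) + A(x_j^⊤θ*))` and
`N_j(r) = exp(∇f_j(θ*)^⊤r − (L/2) r^⊤x_j x_j^⊤ r)`, where
`∇f_j(θ*) = (A'(x_j^⊤θ*) − T(y_j)) x_j`.  Then `E[M_j(r)|ℱ_{j−1}] = 1`, and if `A` is
`L`-smooth then `E[N_j(r)|ℱ_{j−1}] ≤ 1`. -/
theorem glm_martingale_increment
    {Ω : Type*} {m : MeasurableSpace Ω} (P : Measure Ω) [IsProbabilityMeasure P]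
    (ℱ : Filtration ℕ m) {d : ℕ}
    (A : ℝ → ℝ) (T hbase : ℝ → ℝ) (hA : ContDiff ℝ 2 A) (L : ℝ)
    (θstar : Fin d → ℝ)
    (x : ℕ → Ω → Fin d → ℝ) (y : ℕ → Ω → ℝ)
    (hx_adapted : ∀ s : ℕ, 1 ≤ s → Measurable[ℱ (s - 1)] (x s))
    (hy_meas : ∀ s, Measurable (y s))
    -- the exponential-family conditional density p_θ(y|x), normalized for every natural
    -- parameter η ∈ ℝ
    (p : (Fin d → ℝ) → (Fin d → ℝ) → ℝ → ℝ)
    (hp : ∀ θ xv v, p θ xv v = hbase v * Real.exp (T v * (xv ⬝ᵥ θ) - A (xv ⬝ᵥ θ)))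
    (hnorm : ∀ η : ℝ, ∫ v, hbase v * Real.exp (T v * η - A η) = 1)
    -- model: conditionally on ℱ_{s−1}, y_s has density p_{θ*}(·|x_s) w.r.t. Lebesgue measure
    (hmodel : ∀ s : ℕ, 1 ≤ s → ∀ g : Ω × ℝ → ℝ,
      StronglyMeasurable[(ℱ (s - 1)).prod (borel ℝ)] g →
      Integrable (fun ω => g (ω, y s ω)) P →
      P[fun ω => g (ω, y s ω)|ℱ (s - 1)] =ᵐ[P]
        fun ω => ∫ v, g (ω, v) * p θstar (x s ω) v)
    -- L-smoothness of A: quadratic upper bound everywhere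
    (hAsmooth : ∀ z u : ℝ, A (z + u) ≤ A z + deriv A z * u + L / 2 * u ^ 2)
    (r : Fin d → ℝ) (j : ℕ) (hj : 1 ≤ j)
    (M N : Ω → ℝ)
    (hM : ∀ ω, M ω = Real.exp
      ((deriv A (x j ω ⬝ᵥ θstar) - T (y j ω)) * (x j ω ⬝ᵥ r)
        - deriv A (x j ω ⬝ᵥ θstar) * (x j ω ⬝ᵥ r)
        - A (x j ω ⬝ᵥ θstar - x j ω ⬝ᵥ r) + A (x j ω ⬝ᵥ θstar)))
    (hN : ∀ ω, N ω = Real.exp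
      ((deriv A (x j ω ⬝ᵥ θstar) - T (y j ω)) * (x j ω ⬝ᵥ r)
        - L / 2 * (x j ω ⬝ᵥ r) ^ 2))
    (hMint : Integrable M P) (hNint : Integrable N P) :
    (P[M|ℱ (j - 1)] =ᵐ[P] fun _ => 1) ∧
      (∀ᵐ ω ∂P, (P[N|ℱ (j - 1)]) ω ≤ 1) := by
  have hdens : HasCondDensity P (ℱ (j - 1)) (y j) fun ω => p θstar (x j ω) := hmodel j hj
  obtain ⟨T', hT', S, hS, hTS, hSh⟩ := exists_measurable_eq_off_of_aestronglyMeasurable_mul_exp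
    (by simpa using (integrable_mul_exp_of_integral_eq_one hnorm 0).aestronglyMeasurable)
    (by simpa using (integrable_mul_exp_of_integral_eq_one hnorm 1).aestronglyMeasurable)
  have hyS : ∀ᵐ ω ∂P, y j ω ∉ S := hdens.ae_notMem (ℱ.le _) (hy_meas j) hS fun ω => by
    filter_upwards [hSh] with v hv hvS
    rw [hp, hv hvS, zero_mul]
  have hdot (c : Fin d → ℝ) : Measurable[ℱ (j - 1)] fun ω => x j ω ⬝ᵥ c :=
    (continuous_id.dotProduct continuous_const).measurable.comp (hx_adapted j hj)
  have hM1 : P[M|ℱ (j - 1)] =ᵐ[P] fun _ => 1 := by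
    refine hdens.condExp_eq_one
      (measurable_expFamilyRatio (mΩ := ℱ (j - 1)) hA.continuous.measurable hT' (hdot θstar)
        (hdot r)).stronglyMeasurable ?_ hMint fun ω => ?_
    · filter_upwards [hyS] with ω hω
      rw [hM, expFamilyRatio, hTS _ hω]
      ring_nf
    · simp_rw [hp]
      refine integral_expFamilyRatio_mul ?_ hnorm _ _
      filter_upwards [hSh] with v hv hv0
      exact hTS v fun hvS => hv0 (hv hvS)
  have hNM : N ≤ M := fun ω => by
    have hquad := hAsmooth (x j ω ⬝ᵥ θstar) (-(x j ω ⬝ᵥ r))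
    rw [← sub_eq_add_neg, neg_sq] at hquad
    rw [hN, hM, Real.exp_le_exp]
    linarith
  refine ⟨hM1, ?_⟩
  filter_upwards [condExp_mono hNint hMint (.of_forall hNM), hM1] with ω hle h1
  exact hle.trans h1.le
end

section
/- Let V be a symmetric positive definite d×d matrix with V ⪰ λ I for some λ > 0, let K > 0 and k ∈ (0,1). Define N(h) = ∫_{‖x‖_2 ≤ K} exp(−λ‖x‖_2²) dx and N(g) = ∫_{‖x‖_2 ≤ (1−k)K} exp(−(1/2) x^⊤ V x) dx. Then log( N(h)/N(g) ) ≤ d · log( 1/(1−k) ) + log( det(V)^{1/2} / λ^{d/2} ). -/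
/-!
Write `V = AᵀA` and substitute `x = c A⁻¹ y` with `c = (1 - k)√λ`. The quadratic form becomes
`½ xᵀVx = ½ c²‖y‖² ≤ λ‖y‖²`, and since `V ⪰ λI` gives `λ‖A⁻¹y‖² ≤ ‖y‖²`, the substitution maps the
ball of radius `K` into the ball of radius `(1 - k)K`. Comparing the two integrals yields
`|det (c A⁻¹)| N(h) ≤ N(g)` with `|det (c A⁻¹)| = cᵈ / √(det V)`, which is the bound after taking
logarithms.
-/

open Matrix MeasureTheory

namespace Matrix

variable {n : Type*} [Fintype n]

theorem isCompact_setOf_dotProduct_self_le (r : ℝ) : IsCompact {x : n → ℝ | x ⬝ᵥ x ≤ r} := by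
  refine Metric.isCompact_of_isClosed_isBounded
    (isClosed_le (continuous_id.dotProduct continuous_id) continuous_const) ?_
  refine (Metric.isBounded_closedBall (x := 0) (r := √r)).subset fun x hx => ?_
  rw [mem_closedBall_zero_iff, pi_norm_le_iff_of_nonneg (Real.sqrt_nonneg r)]
  refine fun i => Real.abs_le_sqrt (le_trans ?_ hx)
  simpa only [sq, dotProduct] using
    Finset.single_le_sum (fun j _ => mul_self_nonneg (x j)) (Finset.mem_univ i)

theorem integrableOn_setOf_dotProduct_self_le {f : (n → ℝ) → ℝ} (hf : Continuous f) (r : ℝ) :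
    IntegrableOn f {x : n → ℝ | x ⬝ᵥ x ≤ r} :=
  hf.continuousOn.integrableOn_compact (isCompact_setOf_dotProduct_self_le r)

theorem setIntegral_setOf_dotProduct_self_le_pos {f : (n → ℝ) → ℝ} (hf : Continuous f)
    (hpos : ∀ x, 0 < f x) {r : ℝ} (hr : 0 < r) :
    0 < ∫ x in {x : n → ℝ | x ⬝ᵥ x ≤ r}, f x := by
  have hcont : Continuous fun x : n → ℝ => x ⬝ᵥ x := continuous_id.dotProduct continuous_id
  rw [setIntegral_pos_iff_support_of_nonneg_ae (.of_forall fun x => (hpos x).le)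
    (integrableOn_setOf_dotProduct_self_le hf r),
    show Function.support f = Set.univ from Set.eq_univ_of_forall fun x => (hpos x).ne',
    Set.univ_inter]
  calc (0 : ENNReal) < volume {x : n → ℝ | x ⬝ᵥ x < r} :=
        (isOpen_lt hcont continuous_const).measure_pos volume ⟨0, by simpa using hr⟩
    _ ≤ _ := measure_mono (Set.ofPred_subset_ofPred.mpr fun _ => le_of_lt)

variable [DecidableEq n]

theorem integral_image_mulVec {M : Matrix n n ℝ} (hM : M.det ≠ 0) {s : Set (n → ℝ)}
    (hs : MeasurableSet s) (g : (n → ℝ) → ℝ) :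
    ∫ x in (M *ᵥ ·) '' s, g x = |M.det| * ∫ y in s, g (M *ᵥ y) := by
  let L := LinearMap.toContinuousLinearMap (toLin' M)
  have hder : ∀ x ∈ s, HasFDerivWithinAt (M *ᵥ ·) L s x := fun x _ =>
    L.hasFDerivAt.hasFDerivWithinAt
  rw [integral_image_eq_integral_abs_det_fderiv_smul volume hs hder
    (mulVec_injective_of_det_ne_zero hM).injOn, ← integral_const_mul]
  simp [L, ContinuousLinearMap.det, LinearMap.det_toLin']

theorem abs_det_mul_setIntegral_comp_le {M : Matrix n n ℝ} (hM : M.det ≠ 0) {s t : Set (n → ℝ)}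
    (hs : MeasurableSet s) (hst : (M *ᵥ ·) '' s ⊆ t) {g : (n → ℝ) → ℝ} (hg : 0 ≤ g)
    (hgt : IntegrableOn g t) :
    |M.det| * ∫ y in s, g (M *ᵥ y) ≤ ∫ x in t, g x := by
  rw [← integral_image_mulVec hM hs]
  exact setIntegral_mono_set hgt (.of_forall hg) (.of_forall hst)

theorem mul_dotProduct_self_le_of_posSemidef_sub {V : Matrix n n ℝ} {lam : ℝ}
    (h : (V - lam • 1).PosSemidef) (x : n → ℝ) : lam * (x ⬝ᵥ x) ≤ x ⬝ᵥ V *ᵥ x := by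
  have := h.dotProduct_mulVec_nonneg x
  simp only [star_trivial, sub_mulVec, dotProduct_sub, smul_mulVec, one_mulVec,
    dotProduct_smul, smul_eq_mul] at this
  linarith

open scoped MatrixOrder in
theorem PosDef.exists_whitening {V : Matrix n n ℝ} (hV : V.PosDef) :
    ∃ T : Matrix n n ℝ, |T.det| = (√V.det)⁻¹ ∧ ∀ y, T *ᵥ y ⬝ᵥ V *ᵥ (T *ᵥ y) = y ⬝ᵥ y := by
  obtain ⟨A, rfl⟩ := CStarAlgebra.nonneg_iff_eq_star_mul_self.mp hV.posSemidef.nonneg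
  have hdet : (star A * A).det = A.det ^ 2 := by
    rw [det_mul, star_eq_conjTranspose, det_conjTranspose, star_trivial, sq]
  have hA : A.det ≠ 0 := by
    have := hV.det_pos
    rw [hdet] at this
    exact pow_ne_zero_iff two_ne_zero |>.mp this.ne'
  refine ⟨A⁻¹, ?_, fun y => ?_⟩
  · rw [hdet, Real.sqrt_sq_eq_abs, det_nonsing_inv, Ring.inverse_eq_inv', abs_inv]
  · rw [star_eq_conjTranspose, conjTranspose_eq_transpose_of_trivial, ← mulVec_mulVec _ Aᵀ A,
      dotProduct_mulVec, vecMul_transpose, mulVec_mulVec _ A A⁻¹,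
      mul_nonsing_inv A (isUnit_iff_ne_zero.mpr hA), one_mulVec]

theorem image_smul_whitening_subset {V T : Matrix n n ℝ} {lam : ℝ} (hlam : 0 ≤ lam)
    (hlower : (V - lam • 1).PosSemidef) (hT : ∀ y, T *ᵥ y ⬝ᵥ V *ᵥ (T *ᵥ y) = y ⬝ᵥ y) (t K : ℝ) :
    (((t * √lam) • T) *ᵥ ·) '' {y | y ⬝ᵥ y ≤ K ^ 2} ⊆ {x | x ⬝ᵥ x ≤ (t * K) ^ 2} := by
  rintro _ ⟨y, hy, rfl⟩
  have hTy := mul_dotProduct_self_le_of_posSemidef_sub hlower (T *ᵥ y)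
  rw [hT] at hTy
  calc ((t * √lam) • T) *ᵥ y ⬝ᵥ ((t * √lam) • T) *ᵥ y = t ^ 2 * (lam * (T *ᵥ y ⬝ᵥ T *ᵥ y)) := by
        simp only [smul_mulVec, dotProduct_smul, smul_dotProduct, smul_eq_mul]
        linear_combination t ^ 2 * (T *ᵥ y ⬝ᵥ T *ᵥ y) * Real.sq_sqrt hlam
    _ ≤ t ^ 2 * K ^ 2 := by gcongr; exact hTy.trans hy
    _ = (t * K) ^ 2 := (mul_pow t K 2).symm

theorem mul_setIntegral_exp_le_setIntegral_exp_quadForm {V : Matrix n n ℝ} (hV : V.PosDef)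
    {lam t : ℝ} (hlam : 0 < lam) (hlower : (V - lam • 1).PosSemidef) (ht : 0 < t)
    (ht2 : t ^ 2 ≤ 2) (K : ℝ) :
    (t * √lam) ^ Fintype.card n / √V.det *
        ∫ x in {x : n → ℝ | x ⬝ᵥ x ≤ K ^ 2}, Real.exp (-lam * (x ⬝ᵥ x))
      ≤ ∫ x in {x : n → ℝ | x ⬝ᵥ x ≤ (t * K) ^ 2}, Real.exp (-(1 / 2) * (x ⬝ᵥ V *ᵥ x)) := by
  obtain ⟨T, hTdet, hTV⟩ := hV.exists_whitening
  set c := t * √lam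
  have hc : 0 < c := mul_pos ht (Real.sqrt_pos.mpr hlam)
  set M := c • T
  have hMdet : |M.det| = c ^ Fintype.card n / √V.det := by
    rw [det_smul, abs_mul, abs_pow, abs_of_pos hc, hTdet, div_eq_mul_inv]
  have hMdet_ne : M.det ≠ 0 := by
    rw [← abs_pos, hMdet]
    exact div_pos (pow_pos hc _) (Real.sqrt_pos.mpr hV.det_pos)
  have hMV (y : n → ℝ) : M *ᵥ y ⬝ᵥ V *ᵥ (M *ᵥ y) = c ^ 2 * (y ⬝ᵥ y) := by
    simp only [M, smul_mulVec, mulVec_smul, dotProduct_smul, smul_dotProduct, hTV, smul_eq_mul]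
    ring
  have hB : MeasurableSet {y : n → ℝ | y ⬝ᵥ y ≤ K ^ 2} :=
    (isCompact_setOf_dotProduct_self_le _).isClosed.measurableSet
  rw [← hMdet]
  calc |M.det| * ∫ x in {x : n → ℝ | x ⬝ᵥ x ≤ K ^ 2}, Real.exp (-lam * (x ⬝ᵥ x))
      ≤ |M.det| * ∫ y in {y : n → ℝ | y ⬝ᵥ y ≤ K ^ 2},
          Real.exp (-(1 / 2) * (c ^ 2 * (y ⬝ᵥ y))) := by
        refine mul_le_mul_of_nonneg_left (setIntegral_mono_on ?_ ?_ hB fun y _ => ?_)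
          (abs_nonneg _)
        · exact integrableOn_setOf_dotProduct_self_le (by fun_prop) _
        · exact integrableOn_setOf_dotProduct_self_le (by fun_prop) _
        · have hy : 0 ≤ y ⬝ᵥ y := by simpa using dotProduct_star_self_nonneg y
          rw [Real.exp_le_exp, mul_pow, Real.sq_sqrt hlam.le]
          nlinarith [mul_le_mul_of_nonneg_right ht2 (mul_nonneg hlam.le hy)]
    _ = |M.det| * ∫ y in {y : n → ℝ | y ⬝ᵥ y ≤ K ^ 2},
          Real.exp (-(1 / 2) * (M *ᵥ y ⬝ᵥ V *ᵥ (M *ᵥ y))) := by simp only [hMV]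
    _ ≤ _ := abs_det_mul_setIntegral_comp_le hMdet_ne hB
        (image_smul_whitening_subset hlam.le hlower hTV t K) (fun x => (Real.exp_pos _).le)
        (integrableOn_setOf_dotProduct_self_le (Real.continuous_exp.comp (continuous_const.mul
          (continuous_id.dotProduct (continuous_const.matrix_mulVec continuous_id)))) _)

end Matrix

theorem normalizing_constants_ratio_bound_general
    {d : ℕ} (V : Matrix (Fin d) (Fin d) ℝ) (lam K k : ℝ)
    (hlam : 0 < lam) (hK : 0 < K) (hk : k ∈ Set.Ioo (0 : ℝ) 1)
    (hposdef : V.PosDef)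
    (hlower : (V - lam • (1 : Matrix (Fin d) (Fin d) ℝ)).PosSemidef)
    (Nh Ng : ℝ)
    (hNh : Nh = ∫ x in {x : Fin d → ℝ | x ⬝ᵥ x ≤ K ^ 2},
      Real.exp (-lam * (x ⬝ᵥ x)))
    (hNg : Ng = ∫ x in {x : Fin d → ℝ | x ⬝ᵥ x ≤ ((1 - k) * K) ^ 2},
      Real.exp (-(1 / 2) * (x ⬝ᵥ V *ᵥ x))) :
    Real.log (Nh / Ng)
      ≤ d * Real.log (1 / (1 - k)) + Real.log (Real.sqrt V.det / lam ^ ((d : ℝ) / 2)) := by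
  obtain ⟨hk0, hk1⟩ := hk
  have h1k : 0 < 1 - k := by linarith
  have hcmp := mul_setIntegral_exp_le_setIntegral_exp_quadForm hposdef hlam hlower h1k
    (by nlinarith) K
  rw [Fintype.card_fin, ← hNh, ← hNg] at hcmp
  have hNh_pos : 0 < Nh := hNh ▸ setIntegral_setOf_dotProduct_self_le_pos (by fun_prop)
    (fun _ => Real.exp_pos _) (pow_pos hK 2)
  have hsqrt_det : 0 < √V.det := Real.sqrt_pos.mpr hposdef.det_pos
  have hc : 0 < ((1 - k) * √lam) ^ d / √V.det :=
    div_pos (pow_pos (mul_pos h1k (Real.sqrt_pos.mpr hlam)) d) hsqrt_det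
  have hNg_pos : 0 < Ng := (mul_pos hc hNh_pos).trans_le hcmp
  calc Real.log (Nh / Ng) ≤ Real.log (((1 - k) * √lam) ^ d / √V.det)⁻¹ := by
        refine Real.log_le_log (div_pos hNh_pos hNg_pos) ?_
        rw [div_le_iff₀ hNg_pos, inv_mul_eq_div, le_div_iff₀ hc, mul_comm]
        exact hcmp
    _ = _ := by
        rw [Real.rpow_div_two_eq_sqrt _ hlam.le, Real.rpow_natCast, ← Real.log_pow,
          ← Real.log_mul (by positivity) (div_pos hsqrt_det (by positivity)).ne', inv_div, mul_pow,
          _root_.one_div_pow]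
        field_simp

/-- Lemma 11, ratio of normalizing constants.
Let `V` be a symmetric positive-definite `d×d` matrix with `V ⪰ λI`, `λ > 0`, `K > 0` and
`k ∈ (0,1)`.  With `N(h) = ∫_{‖x‖₂ ≤ K} exp(−λ‖x‖₂²) dx` and
`N(g) = ∫_{‖x‖₂ ≤ (1−k)K} exp(−(1/2) x^⊤Vx) dx`, we have
`log(N(h)/N(g)) ≤ d log(1/(1−k)) + log(det(V)^{1/2}/λ^{d/2})`. -/
theorem normalizing_constants_ratio_bound
    {d : ℕ} (V : Matrix (Fin d) (Fin d) ℝ) (lam K k : ℝ)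
    (hlam : 0 < lam) (hK : 0 < K) (hk : k ∈ Set.Ioo (0 : ℝ) 1)
    (hsymm : V.IsSymm)
    (hposdef : V.PosDef)
    (hlower : (V - lam • (1 : Matrix (Fin d) (Fin d) ℝ)).PosSemidef)
    (Nh Ng : ℝ)
    (hNh : Nh = ∫ x in {x : Fin d → ℝ | x ⬝ᵥ x ≤ K ^ 2},
      Real.exp (-lam * (x ⬝ᵥ x)))
    (hNg : Ng = ∫ x in {x : Fin d → ℝ | x ⬝ᵥ x ≤ ((1 - k) * K) ^ 2},
      Real.exp (-(1 / 2) * (x ⬝ᵥ V *ᵥ x))) :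
    Real.log (Nh / Ng)
      ≤ d * Real.log (1 / (1 - k)) + Real.log (Real.sqrt V.det / lam ^ ((d : ℝ) / 2)) :=
  normalizing_constants_ratio_bound_general V lam K k hlam hK hk hposdef hlower Nh Ng hNh hNg
end
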